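/- Let U = T_D (D ≥ 1) with the Pommaret relative involutive division M_P(u) = { i | i ≤ min(u) }, and let G_U be the Ufnarovsky-like graph on U: there is an edge t → s if and only if there exists an index j ∉ M_P(s) with s + e_j ∈ C(t). Let N ⊆ U and set H = (⋃_{l ∈ N} C(l)) ∪ { v | deg(v) < D }. Then H is an order ideal (downward closed under divisibility) if and only if N is Ufnarovsky-revenant, i.e. for all t, s ∈ U with an edge t → s in G_U and t ∈ N, also s ∈ N. -/

import Mathlib

/-!
Every `w` with `deg w ≥ D` lies in the Pommaret cone `C(u)` of exactly one `u ∈ T_D`, its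
ancestor: in some cone because `C(u)` is closed under multiplying by `x_j` for `j ≤ min u` (peel
off the lowest variable of `w`), and in only one because two ancestors of the same `w` are
comparable, hence equal since they have the same degree.

It suffices to treat a single division `v ∣ v + e_i`. If `v ∈ C(s)` and `v + e_i ∈ C(t)`, then
either `i ≤ min s`, so `v + e_i ∈ C(s)` and `s = t`, or `i > min s`, and then the ancestor of
`s + e_i` is also an ancestor of `v + e_i`, i.e. it is `t`: this is the edge `t → s`. So
revenance carries membership in `N` from the ancestor of `w` down to that of `v`.
-/

/-- The degree of an exponent vector: the sum of the exponents. -/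
def deg {n : ℕ} (u : Fin n → ℕ) : ℕ := ∑ i, u i

/-- The support of an exponent vector: the indices with nonzero exponent. -/
def supp {n : ℕ} (u : Fin n → ℕ) : Set (Fin n) := {i | u i ≠ 0}

/-- Given an assignment `M` of multiplicative variables, the cone of `u` is the set
of all `u + v` where the support of `v` is contained in `M u`. -/
def cone {n : ℕ} (M : (Fin n → ℕ) → Set (Fin n)) (u : Fin n → ℕ) :
    Set (Fin n → ℕ) :=
  {w | ∃ v : Fin n → ℕ, supp v ⊆ M u ∧ w = u + v}

namespace Pommaret

variable {n : ℕ}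

lemma deg_add (v w : Fin n → ℕ) : deg (v + w) = deg v + deg w :=
  Finset.sum_add_distrib

lemma deg_single (i : Fin n) : deg (Pi.single i 1 : Fin n → ℕ) = 1 := by
  simp [deg, Finset.sum_pi_single']

lemma deg_mono {v w : Fin n → ℕ} (h : v ≤ w) : deg v ≤ deg w :=
  Finset.sum_le_sum fun i _ => h i

lemma eq_of_le_of_deg_le {v w : Fin n → ℕ} (h : v ≤ w) (hdeg : deg w ≤ deg v) : v = w :=
  funext fun i => ((Finset.sum_eq_sum_iff_of_le fun i _ => h i).1
    (le_antisymm (deg_mono h) hdeg) i (Finset.mem_univ i))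

lemma ne_zero_of_deg_ne_zero {u : Fin n → ℕ} (hu : deg u ≠ 0) : u ≠ 0 := by
  rintro rfl
  simp [deg] at hu

lemma exists_lowest_index {u : Fin n → ℕ} (hu : u ≠ 0) :
    ∃ j, u j ≠ 0 ∧ ∀ i < j, u i = 0 := by
  obtain ⟨j, hj, hmin⟩ := wellFounded_lt.has_min {j | u j ≠ 0}
    (Function.ne_iff.1 hu)
  exact ⟨j, hj, fun i hi => by_contra fun h => hmin i h hi⟩

lemma exists_eq_add_single {v w : Fin n → ℕ} {i : Fin n} (hvw : v ≤ w) (hi : v i < w i) :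
    ∃ w', v ≤ w' ∧ w = w' + Pi.single i 1 := by
  refine ⟨w - Pi.single i 1, fun k => ?_, funext fun k => ?_⟩
  · rcases eq_or_ne k i with rfl | hk
    · simpa using Nat.le_sub_one_of_lt hi
    · simpa [hk] using hvw k
  · rcases eq_or_ne k i with rfl | hk
    · simp
      omega
    · simp [hk]

lemma eq_of_mem_cone_of_deg_eq {M : (Fin n → ℕ) → Set (Fin n)} {u w : Fin n → ℕ}
    (hw : w ∈ cone M u) (hdeg : deg w = deg u) : w = u := by
  obtain ⟨v, -, rfl⟩ := hw
  exact (eq_of_le_of_deg_le le_self_add hdeg.le).symm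

/-- The Pommaret cone `C(u)` with `M_P(u) = {i | i ≤ min u}`, written without `min u`: a
coordinate may grow only if no nonzero index of `u` lies strictly below it. -/
def pommaretCone (u : Fin n → ℕ) : Set (Fin n → ℕ) :=
  {w | u ≤ w ∧ ∀ j i, u j ≠ 0 → j < i → w i = u i}

section Bridge

variable {M : (Fin n → ℕ) → Set (Fin n)} {u : Fin n → ℕ} {j : Fin n}

lemma cone_eq_pommaretCone (hj : u j ≠ 0) (hmin : ∀ i < j, u i = 0)
    (hM : M u = {i | i ≤ j}) : cone M u = pommaretCone u := by
  have hlow : ∀ k, u k ≠ 0 → j ≤ k := fun k hk => not_lt.1 fun h => hk (hmin k h)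
  ext w
  constructor
  · rintro ⟨v, hv, rfl⟩
    refine ⟨le_self_add, fun k i hk hki => ?_⟩
    have hvi : v i = 0 := by
      by_contra h
      have hij : i ∈ M u := hv h
      rw [hM] at hij
      exact not_le.2 ((hlow k hk).trans_lt hki) hij
    simp [hvi]
  · rintro ⟨huw, hfrozen⟩
    refine ⟨w - u, fun i hi => ?_, (add_tsub_cancel_of_le huw).symm⟩
    rw [hM]
    exact not_lt.1 fun (hji : j < i) => hi (by simp [hfrozen j i hj hji])

lemma notMem_iff_exists_lt (hj : u j ≠ 0) (hmin : ∀ i < j, u i = 0)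
    (hM : M u = {i | i ≤ j}) (i : Fin n) : i ∉ M u ↔ ∃ k, u k ≠ 0 ∧ k < i := by
  rw [hM, Set.mem_ofPred_eq, not_le]
  exact ⟨fun h => ⟨j, hj, h⟩,
    fun ⟨k, hk, hki⟩ => (not_lt.1 fun h => hk (hmin k h)).trans_lt hki⟩

end Bridge

section Cone

variable {s t u u' v w : Fin n → ℕ}

lemma add_mem_pommaretCone {a : Fin n → ℕ} (hw : w ∈ pommaretCone u)
    (ha : ∀ k i, u k ≠ 0 → k < i → a i = 0) : w + a ∈ pommaretCone u :=
  ⟨hw.1.trans le_self_add, fun k i hk hki => by simp [hw.2 k i hk hki, ha k i hk hki]⟩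

lemma le_total_of_mem_pommaretCone (hu : w ∈ pommaretCone u) (hu' : w ∈ pommaretCone u') :
    u ≤ u' ∨ u' ≤ u := by
  by_contra! h
  obtain ⟨⟨a, ha⟩, ⟨b, hb⟩⟩ : (∃ a, u' a < u a) ∧ ∃ b, u b < u' b := by
    simpa [Pi.le_def] using h
  rcases lt_trichotomy a b with hab | rfl | hab
  · have := hu.2 a b (by omega) hab
    have : u' b ≤ w b := hu'.1 b
    omega
  · omega
  · have := hu'.2 b a (by omega) hab
    have : u a ≤ w a := hu.1 a
    omega

lemma eq_of_mem_pommaretCone (hdeg : deg u = deg u') (hu : w ∈ pommaretCone u)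
    (hu' : w ∈ pommaretCone u') : u = u' := by
  rcases le_total_of_mem_pommaretCone hu hu' with h | h
  · exact eq_of_le_of_deg_le h hdeg.ge
  · exact (eq_of_le_of_deg_le h hdeg.le).symm

lemma exists_mem_pommaretCone {D : ℕ} (hw : D ≤ deg w) :
    ∃ u, deg u = D ∧ w ∈ pommaretCone u := by
  obtain ⟨k, hk⟩ := Nat.exists_eq_add_of_le hw
  induction k generalizing w with
  | zero => exact ⟨w, hk, le_rfl, fun _ _ _ _ => rfl⟩
  | succ k ih =>
    obtain ⟨j, hj, hmin⟩ :=
      exists_lowest_index (ne_zero_of_deg_ne_zero (by omega : deg w ≠ 0))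
    obtain ⟨w', -, rfl⟩ := exists_eq_add_single (fun _ => Nat.zero_le _) (Nat.pos_of_ne_zero hj)
    have hdeg : deg w' = D + k := by
      rw [deg_add, deg_single] at hk
      omega
    obtain ⟨u, hu, hw'⟩ := ih (by omega) hdeg
    -- `j` is the lowest variable of `w`, so it lies below every nonzero index of `u ≤ w`.
    refine ⟨u, hu, add_mem_pommaretCone hw' fun k i hk hki => ?_⟩
    have hjk : j ≤ k := not_lt.1 fun h => hk <| by
      have : u k ≤ (w' + Pi.single j 1 : Fin n → ℕ) k := hw'.1.trans le_self_add k
      rw [hmin k h] at this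
      omega
    simp [(hjk.trans_lt hki).ne']

/-- The edge `t → s` of the Ufnarovsky-like graph, with `j ∉ M_P(s)` written as `min s < j`. -/
def Edge (t s : Fin n → ℕ) : Prop :=
  ∃ j, (∃ k, s k ≠ 0 ∧ k < j) ∧ s + Pi.single j 1 ∈ pommaretCone t

lemma eq_or_edge_of_mem_pommaretCone_add_single {D : ℕ} {i : Fin n} (hs : deg s = D)
    (ht : deg t = D) (hv : v ∈ pommaretCone s) (hvi : v + Pi.single i 1 ∈ pommaretCone t) :
    s = t ∨ Edge t s := by
  by_cases hi : ∃ k, s k ≠ 0 ∧ k < i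
  · obtain ⟨t', ht', hst'⟩ : ∃ t', deg t' = D ∧ s + Pi.single i 1 ∈ pommaretCone t' :=
      exists_mem_pommaretCone (by rw [deg_add, deg_single]; omega)
    have hvi' : (s + Pi.single i 1) + (v - s) ∈ pommaretCone t' := by
      refine add_mem_pommaretCone hst' fun k i' hk hki' => ?_
      obtain ⟨k', hk', hk'i'⟩ : ∃ k', s k' ≠ 0 ∧ k' < i' := by
        by_cases hki : k = i
        · obtain ⟨k', hk', hk'i⟩ := hi
          exact ⟨k', hk', hk'i.trans (hki ▸ hki')⟩
        · exact ⟨k, fun h => hk (by simpa [Pi.single_eq_of_ne hki, h] using hst'.1 k), hki'⟩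
      simp [hv.2 k' i' hk' hk'i']
    rw [show s + Pi.single i 1 + (v - s) = v + Pi.single i 1 by
      rw [add_right_comm, add_tsub_cancel_of_le hv.1]] at hvi'
    exact Or.inr ⟨i, hi, eq_of_mem_pommaretCone (ht'.trans ht.symm) hvi' hvi ▸ hst'⟩
  · push Not at hi
    refine Or.inl (eq_of_mem_pommaretCone (hs.trans ht.symm)
      (add_mem_pommaretCone hv fun k i' hk hki' => ?_) hvi)
    simp [(hki'.trans_le' (hi k hk)).ne']

def IsRevenant (D : ℕ) (N : Set (Fin n → ℕ)) : Prop :=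
  ∀ t s, deg t = D → deg s = D → Edge t s → t ∈ N → s ∈ N

lemma IsRevenant.mem_of_le {D : ℕ} {N : Set (Fin n → ℕ)} (hN : IsRevenant D N) (hvw : v ≤ w)
    (hs : deg s = D) (ht : deg t = D) (hv : v ∈ pommaretCone s) (hw : w ∈ pommaretCone t)
    (htN : t ∈ N) : s ∈ N := by
  obtain ⟨k, hk⟩ := Nat.exists_eq_add_of_le (deg_mono hvw)
  induction k generalizing w t with
  | zero =>
    obtain rfl := eq_of_le_of_deg_le hvw hk.le
    rwa [eq_of_mem_pommaretCone (hs.trans ht.symm) hv hw]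
  | succ k ih =>
    obtain ⟨i, hi⟩ : ∃ i, v i < w i := by
      by_contra! h
      have := deg_mono h
      omega
    obtain ⟨w', hvw', rfl⟩ := exists_eq_add_single hvw hi
    have hDw' : D ≤ deg w' := hs ▸ (deg_mono (hv.1.trans hvw'))
    obtain ⟨t', ht', hw'⟩ := exists_mem_pommaretCone hDw'
    have ht'N : t' ∈ N := (eq_or_edge_of_mem_pommaretCone_add_single ht' ht hw' hw).elim
      (· ▸ htN) (hN t t' ht ht' · htN)
    exact ih hvw' ht' hw' ht'N (by rw [deg_add, deg_single] at hk; omega)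

end Cone

end Pommaret

open Pommaret

theorem pommaret_orderIdeal_iff_ufnarovsky_revenant_general (n D : ℕ)
    (hD : 1 ≤ D) (M : (Fin n → ℕ) → Set (Fin n))
    (hM : ∀ u : Fin n → ℕ, deg u = D →
      ∀ j : Fin n, (u j ≠ 0 ∧ ∀ i < j, u i = 0) → M u = {i : Fin n | i ≤ j})
    (N : Set (Fin n → ℕ)) (hN : N ⊆ {u : Fin n → ℕ | deg u = D}) :
    (∀ w ∈ (⋃ l ∈ N, cone M l) ∪ {v : Fin n → ℕ | deg v < D},
        ∀ v : Fin n → ℕ, (∀ i, v i ≤ w i) →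
          v ∈ (⋃ l ∈ N, cone M l) ∪ {v : Fin n → ℕ | deg v < D}) ↔
      (∀ t s : Fin n → ℕ, deg t = D → deg s = D →
        (∃ j : Fin n, j ∉ M s ∧ s + Pi.single j 1 ∈ cone M t) →
        t ∈ N → s ∈ N) := by
  have hP : ∀ u, deg u = D →
      cone M u = pommaretCone u ∧ ∀ i, i ∉ M u ↔ ∃ k, u k ≠ 0 ∧ k < i := by
    intro u hu
    obtain ⟨j, hj, hmin⟩ :=
      exists_lowest_index (ne_zero_of_deg_ne_zero (by omega : deg u ≠ 0))
    have hMu := hM u hu j ⟨hj, hmin⟩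
    exact ⟨cone_eq_pommaretCone hj hmin hMu, notMem_iff_exists_lt hj hmin hMu⟩
  constructor
  · rintro hH t s ht hs ⟨j, -, hj⟩ htN
    obtain hs' | hs' := hH _ (Or.inl (Set.mem_biUnion htN hj)) s fun _ => Nat.le_add_right _ _
    · obtain ⟨l, hlN, hsl⟩ := Set.mem_iUnion₂.1 hs'
      rwa [eq_of_mem_cone_of_deg_eq hsl (hs.trans (hN hlN).symm)]
    · exact absurd hs' (by simp [hs])
  · intro hR w hw v hvw
    refine (lt_or_ge (deg v) D).elim Or.inr fun hv => Or.inl ?_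
    obtain ⟨t, htN, hwt⟩ : ∃ t ∈ N, w ∈ cone M t := by
      refine hw.elim (by simpa using ·) fun hw => absurd (hv.trans (deg_mono hvw)) (not_le.2 hw)
    obtain ⟨s, hs, hvs⟩ := exists_mem_pommaretCone hv
    have ht : deg t = D := hN htN
    have hrev : IsRevenant D N := fun t s ht hs ⟨j, hj, hjt⟩ =>
      hR t s ht hs ⟨j, ((hP s hs).2 j).2 hj, (hP t ht).1 ▸ hjt⟩
    exact Set.mem_biUnion (hrev.mem_of_le hvw hs ht hvs ((hP t ht).1 ▸ hwt) htN)
      ((hP s hs).1 ▸ hvs)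

/-- Let `M` be the Pommaret division on `U = T_D` (multiplicative variables of
`u` are `{i | i ≤ min(u)}`). In the Ufnarovsky-like graph there is an edge
`t → s` iff some non-multiplicative index `j` of `s` satisfies
`s + e_j ∈ C(t)`. For `N ⊆ U`, the set
`H = (⋃_{l ∈ N} C(l)) ∪ {v | deg v < D}` is an order ideal (downward closed
under divisibility, i.e. pointwise `≤`) iff `N` is Ufnarovsky-revenant:
whenever there is an edge `t → s` with `t ∈ N`, also `s ∈ N`. -/
theorem pommaret_orderIdeal_iff_ufnarovsky_revenant (n D : ℕ) (hn : 1 ≤ n)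
    (hD : 1 ≤ D) (M : (Fin n → ℕ) → Set (Fin n))
    (hM : ∀ u : Fin n → ℕ, deg u = D →
      ∀ j : Fin n, (u j ≠ 0 ∧ ∀ i < j, u i = 0) → M u = {i : Fin n | i ≤ j})
    (N : Set (Fin n → ℕ)) (hN : N ⊆ {u : Fin n → ℕ | deg u = D}) :
    (∀ w ∈ (⋃ l ∈ N, cone M l) ∪ {v : Fin n → ℕ | deg v < D},
        ∀ v : Fin n → ℕ, (∀ i, v i ≤ w i) →
          v ∈ (⋃ l ∈ N, cone M l) ∪ {v : Fin n → ℕ | deg v < D}) ↔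
      (∀ t s : Fin n → ℕ, deg t = D → deg s = D →
        (∃ j : Fin n, j ∉ M s ∧ s + Pi.single j 1 ∈ cone M t) →
        t ∈ N → s ∈ N) :=
  pommaret_orderIdeal_iff_ufnarovsky_revenant_general n D hD M hM N hN
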